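/- arXiv:1601.05716 — 3 statements merged into one kernel-verified Lean document; each statement's English description precedes it below -/
import Mathlib

section
/- Let n, N, q be integers with 1 ≤ n ≤ N and q > 2N − n + 1, and let H_1, …, H_q be hyperplanes of ℙ^n(ℂ) with coefficient vectors h_1, …, h_q ∈ ℂ^{n+1} in N-subgeneral position. Then there exist positive rational numbers ω(1), …, ω(q) (Nochka weights) satisfying: (i) 0 < ω(j) ≤ q for all j ∈ {1,…,q}; (ii) setting ω̃ := max_{1≤j≤q} ω(j), one has ∑_{j=1}^q ω(j) = ω̃·(q − 2N + n − 1) + n + 1; (iii) (n+1)/(2N−n+1) ≤ ω̃ ≤ n/N; (iv) for every nonempty subset R ⊆ {1,…,q} with |R| ≤ N + 1, ∑_{j∈R} ω(j) ≤ rk(R). -/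
open Finset

noncomputable section

/-- `H₁, …, H_q` (given by coefficient vectors) are in `N`-subgeneral position. -/
def SubgeneralPos (N : ℕ) {n q : ℕ} (h : Fin q → Fin (n + 1) → ℂ) : Prop :=
  (∀ j, h j ≠ 0) ∧
  ∀ R : Finset (Fin q), R.card = N + 1 → Submodule.span ℂ (h '' ↑R) = ⊤

/-- `rk(R)`: the dimension of the span of the coefficient vectors indexed by `R`. -/
def rk {n q : ℕ} (h : Fin q → Fin (n + 1) → ℂ) (R : Finset (Fin q)) : ℕ :=
  Module.finrank ℂ (Submodule.span ℂ (h '' ↑R))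

/-!
Nochka's weights come from a lower convex hull of the points `(|A|, rk A)`.
Put `θ(B) = (n + 1 - rk B) / (2N - n + 1 - |B|)`, the slope from `(|B|, rk B)` to
`(2N - n + 1, n + 1)`. Starting from `B = ∅`, pass from `B` to a proper superset `B'` of rank
`≤ n` over which the rank grows with the least slope `σ = (rk B' - rk B) / |B' \ B|`, and give the
new elements the weight `σ`. Submodularity of `rk` keeps `∑_S ω ≤ rk S` for `S ⊆ B'`, and as long
as `σ < θ(B)` the slope `θ` increases. At a stage `B` of maximal size no superset has slope below
`θ(B)`; every remaining element gets weight `θ(B)`, which is then the maximal weight. The sum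
identity is the defining equation of `θ(B)`; the bound `∑_R ω ≤ rk R` follows from this
stability when `R \ B` is small, and from the estimate `rk R ≥ |R| - (N - n)` given by subgeneral
position when it is large.
-/

section Rank

variable {n N q : ℕ} (h : Fin q → Fin (n + 1) → ℂ)

@[simp]
lemma rk_empty : rk h ∅ = 0 := by
  simp [rk]

lemma rk_mono {R S : Finset (Fin q)} (hRS : R ⊆ S) : rk h R ≤ rk h S :=
  Submodule.finrank_mono (Submodule.span_mono (Set.image_mono (coe_subset.2 hRS)))

lemma rk_le (R : Finset (Fin q)) : rk h R ≤ n + 1 := by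
  simpa [rk] using Submodule.finrank_le (Submodule.span ℂ (h '' R))

lemma rk_le_card (R : Finset (Fin q)) : rk h R ≤ R.card := by
  rw [rk, ← coe_image]
  exact (finrank_span_finset_le_card _).trans card_image_le

lemma rk_union_add_rk_inter_le (R S : Finset (Fin q)) :
    rk h (R ∪ S) + rk h (R ∩ S) ≤ rk h R + rk h S := by
  have hinter : rk h (R ∩ S) ≤
      Module.finrank ℂ ↥(Submodule.span ℂ (h '' R) ⊓ Submodule.span ℂ (h '' S)) :=
    Submodule.finrank_mono (le_inf (Submodule.span_mono (Set.image_mono (by simp)))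
      (Submodule.span_mono (Set.image_mono (by simp))))
  have hsup := Submodule.finrank_sup_add_finrank_inf_eq
    (Submodule.span ℂ (h '' R)) (Submodule.span ℂ (h '' S))
  rw [rk, coe_union, Set.image_union, Submodule.span_union]
  exact (Nat.add_le_add_left hinter _).trans hsup.le

lemma rk_pos (hne : ∀ j, h j ≠ 0) {R : Finset (Fin q)} (hR : R.Nonempty) : 0 < rk h R := by
  obtain ⟨j, hj⟩ := hR
  have hj1 : rk h {j} = 1 := by
    rw [rk, coe_singleton, Set.image_singleton]
    exact finrank_span_singleton (hne j)
  exact (hj1 ▸ Nat.one_pos).trans_le (rk_mono h (singleton_subset_iff.2 hj))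

end Rank

namespace SubgeneralPos

variable {n N q : ℕ} {h : Fin q → Fin (n + 1) → ℂ}

lemma rk_eq (hH : SubgeneralPos N h) {R : Finset (Fin q)} (hR : N + 1 ≤ R.card) :
    rk h R = n + 1 := by
  obtain ⟨T, hTR, hT⟩ := exists_subset_card_eq hR
  refine le_antisymm (rk_le h R) ?_
  calc n + 1 = rk h T := by rw [rk, hH.2 T hT, finrank_top, Module.finrank_fin_fun]
    _ ≤ rk h R := rk_mono h hTR

lemma card_le_of_rk_le (hH : SubgeneralPos N h) {R : Finset (Fin q)} (hR : rk h R ≤ n) :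
    R.card ≤ N := by
  by_contra! hcard
  have := hH.rk_eq hcard
  omega

lemma card_add_le (hH : SubgeneralPos N h) (hq : N + 1 ≤ q) {R : Finset (Fin q)}
    (hR : R.card ≤ N + 1) : R.card + n ≤ rk h R + N := by
  obtain ⟨T, hRT, -, hT⟩ := exists_subsuperset_card_eq (subset_univ R) hR (by simpa using hq)
  have hfull := hH.rk_eq hT.ge
  have hsub := rk_union_add_rk_inter_le h R (T \ R)
  have hrest := rk_le_card h (T \ R)
  have hcard := card_sdiff_add_card_eq_card hRT
  rw [union_sdiff_of_subset hRT] at hsub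
  omega

end SubgeneralPos

lemma card_sdiff_pos_of_ssubset {ι : Type*} [DecidableEq ι] {s t : Finset ι} (hst : s ⊂ t) :
    (0 : ℚ) < (t \ s).card := by
  exact_mod_cast card_pos.2 (sdiff_nonempty.2 (not_subset_of_ssubset hst))

lemma isGreatest_range_piecewise_const {ι β : Type*} [Preorder β] {s : Finset ι}
    [DecidablePred (· ∈ s)] {f : ι → β} {c : β} (hs : ∃ i, i ∉ s) (hf : ∀ i ∈ s, f i ≤ c) :
    IsGreatest (Set.range (s.piecewise f fun _ => c)) c := by
  obtain ⟨i, hi⟩ := hs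
  refine ⟨⟨i, by simp [hi]⟩, ?_⟩
  rintro _ ⟨j, rfl⟩
  by_cases hj : j ∈ s <;> simp [hj, hf]

namespace Nochka

variable {n N q : ℕ}

def theta (N : ℕ) (h : Fin q → Fin (n + 1) → ℂ) (B : Finset (Fin q)) : ℚ :=
  (n + 1 - rk h B) / (2 * N - n + 1 - B.card)

def IsStable (N : ℕ) (h : Fin q → Fin (n + 1) → ℂ) (B : Finset (Fin q)) : Prop :=
  ∀ A, B ⊆ A → rk h A ≤ n → theta N h B * (A \ B).card ≤ rk h A - rk h B

/-- The invariants of the iteration at stage `B`; only the values of `ω` on `B` matter. -/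
structure IsPartialWeight (N : ℕ) (h : Fin q → Fin (n + 1) → ℂ) (ω : Fin q → ℚ)
    (B : Finset (Fin q)) : Prop where
  rk_le : rk h B ≤ n
  closed : ∀ j ∉ B, rk h B < rk h (insert j B)
  sum_le : ∀ S ⊆ B, ∑ j ∈ S, ω j ≤ rk h S
  sum_eq : ∑ j ∈ B, ω j = rk h B
  pos : ∀ j ∈ B, 0 < ω j
  lt_theta : ∀ j ∈ B, ω j < theta N h B
  theta_empty_le : theta N h ∅ ≤ theta N h B

variable {h : Fin q → Fin (n + 1) → ℂ}

lemma theta_denom_pos (hnN : n ≤ N) (hH : SubgeneralPos N h) {B : Finset (Fin q)}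
    (hB : rk h B ≤ n) : (0 : ℚ) < 2 * N - n + 1 - B.card := by
  have hcard : (B.card : ℚ) ≤ N := by exact_mod_cast hH.card_le_of_rk_le hB
  have hnN' : (n : ℚ) ≤ N := by exact_mod_cast hnN
  linarith

lemma theta_mul_denom (hnN : n ≤ N) (hH : SubgeneralPos N h) {B : Finset (Fin q)}
    (hB : rk h B ≤ n) : theta N h B * (2 * N - n + 1 - B.card) = n + 1 - rk h B :=
  div_mul_cancel₀ _ (theta_denom_pos hnN hH hB).ne'

lemma theta_pos (hnN : n ≤ N) (hH : SubgeneralPos N h) {B : Finset (Fin q)}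
    (hB : rk h B ≤ n) : 0 < theta N h B := by
  have hB' : (rk h B : ℚ) ≤ n := by exact_mod_cast hB
  exact div_pos (by linarith) (theta_denom_pos hnN hH hB)

lemma theta_le_div (hn : 1 ≤ n) (hnN : n ≤ N) (hH : SubgeneralPos N h) (hq : N + 1 ≤ q)
    {B : Finset (Fin q)} (hB : rk h B ≤ n) : theta N h B ≤ n / N := by
  have hnN' : (n : ℚ) ≤ N := by exact_mod_cast hnN
  have hn' : (1 : ℚ) ≤ n := by exact_mod_cast hn
  rw [theta, div_le_div_iff₀ (theta_denom_pos hnN hH hB) (by linarith)]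
  rcases B.eq_empty_or_nonempty with rfl | hne
  · simp only [rk_empty, card_empty, CharP.cast_eq_zero]
    nlinarith [mul_nonneg (sub_nonneg.2 hn') (sub_nonneg.2 hnN')]
  · have hr : (1 : ℚ) ≤ rk h B := by exact_mod_cast rk_pos h hH.1 hne
    have hcard : (B.card : ℚ) + n ≤ rk h B + N := by
      exact_mod_cast hH.card_add_le hq (by have := hH.card_le_of_rk_le hB; omega)
    nlinarith [mul_nonneg (sub_nonneg.2 hnN') (sub_nonneg.2 hr),
      mul_nonneg (by linarith : (0 : ℚ) ≤ n) (by linarith : (0 : ℚ) ≤ rk h B + N - n - B.card)]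

lemma sum_piecewise_const_le_rk {ω : Fin q → ℚ} {B S : Finset (Fin q)} {c : ℚ}
    (hω : ∑ j ∈ S ∩ B, ω j ≤ rk h (S ∩ B))
    (hc : c * (S \ B).card ≤ rk h (B ∪ S) - rk h B) :
    ∑ j ∈ S, B.piecewise ω (fun _ => c) j ≤ rk h S := by
  have hsub : (rk h (S ∪ B) : ℚ) + rk h (S ∩ B) ≤ rk h S + rk h B := by
    exact_mod_cast rk_union_add_rk_inter_le h S B
  rw [union_comm] at hsub
  rw [sum_piecewise, sum_const, nsmul_eq_mul]
  linarith

lemma exists_minimal_slope {B A₀ : Finset (Fin q)} (hBA₀ : B ⊂ A₀) (hA₀ : rk h A₀ ≤ n) :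
    ∃ (B' : Finset (Fin q)) (σ : ℚ), B ⊂ B' ∧ rk h B' ≤ n ∧
      σ * (B' \ B).card = rk h B' - rk h B ∧
      ∀ A, B ⊆ A → rk h A ≤ n → σ * (A \ B).card ≤ rk h A - rk h B := by
  let slope (A : Finset (Fin q)) : ℚ := (rk h A - rk h B) / (A \ B).card
  obtain ⟨B', hB', hmin⟩ := exists_min_image {A | B ⊂ A ∧ rk h A ≤ n} slope
    ⟨A₀, by simp [hBA₀, hA₀]⟩
  simp only [mem_filter, mem_univ, true_and] at hB' hmin
  refine ⟨B', slope B', hB'.1, hB'.2, div_mul_cancel₀ _ (card_sdiff_pos_of_ssubset hB'.1).ne',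
    fun A hBA hA => ?_⟩
  rcases hBA.eq_or_ssubset with rfl | hBA
  · simp
  · exact (le_div_iff₀ (card_sdiff_pos_of_ssubset hBA)).1 (hmin A ⟨hBA, hA⟩)

lemma theta_lt_theta (hnN : n ≤ N) (hH : SubgeneralPos N h) {B B' : Finset (Fin q)} {σ : ℚ}
    (hBB' : B ⊂ B') (hB' : rk h B' ≤ n) (hσ : σ * (B' \ B).card = rk h B' - rk h B)
    (hσθ : σ < theta N h B) : theta N h B < theta N h B' := by
  have hB : rk h B ≤ n := (rk_mono h hBB'.subset).trans hB'
  have hcard : ((B' \ B).card : ℚ) + B.card = B'.card := by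
    exact_mod_cast card_sdiff_add_card_eq_card hBB'.subset
  have hgap := mul_lt_mul_of_pos_right hσθ (card_sdiff_pos_of_ssubset hBB')
  rw [theta.eq_def N h B', lt_div_iff₀ (theta_denom_pos hnN hH hB')]
  linear_combination hgap + theta_mul_denom hnN hH hB - hσ + theta N h B * hcard

lemma closed_of_minimal_slope {B B' : Finset (Fin q)} {σ : ℚ} (hBB' : B ⊆ B')
    (hB' : rk h B' ≤ n) (hσpos : 0 < σ) (hσ : σ * (B' \ B).card = rk h B' - rk h B)
    (hmin : ∀ A, B ⊆ A → rk h A ≤ n → σ * (A \ B).card ≤ rk h A - rk h B) :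
    ∀ j ∉ B', rk h B' < rk h (insert j B') := by
  intro j hj
  by_contra! hle
  have hjB : j ∉ B' \ B := fun hj' => hj (mem_sdiff.1 hj').1
  have h1 := hmin (insert j B') (hBB'.trans (subset_insert j B')) (hle.trans hB')
  rw [insert_sdiff_of_notMem _ (fun hjB => hj (hBB' hjB)), card_insert_of_notMem hjB,
    le_antisymm hle (rk_mono h (subset_insert j B'))] at h1
  push_cast at h1
  linarith

namespace IsPartialWeight

variable {ω : Fin q → ℚ} {B B' : Finset (Fin q)} {σ : ℚ}

lemma empty (hne : ∀ j, h j ≠ 0) : IsPartialWeight N h 0 ∅ where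
  rk_le := by simp
  closed j _ := by simpa using rk_pos h hne (singleton_nonempty j)
  sum_le S hS := by simp [subset_empty.1 hS]
  sum_eq := by simp
  pos := by simp
  lt_theta := by simp
  theta_empty_le := le_rfl

lemma slope_pos (hB : IsPartialWeight N h ω B) (hBB' : B ⊂ B')
    (hσ : σ * (B' \ B).card = rk h B' - rk h B) : 0 < σ := by
  obtain ⟨j, hjB', hjB⟩ := exists_of_ssubset hBB'
  have hrk : rk h B < rk h B' :=
    (hB.closed j hjB).trans_le (rk_mono h (insert_subset hjB' hBB'.subset))
  have hrk' : (0 : ℚ) < σ * (B' \ B).card := by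
    rw [hσ, sub_pos]
    exact_mod_cast hrk
  exact pos_of_mul_pos_left hrk' (card_sdiff_pos_of_ssubset hBB').le

lemma extend (hnN : n ≤ N) (hH : SubgeneralPos N h) (hB : IsPartialWeight N h ω B)
    (hBB' : B ⊂ B') (hB' : rk h B' ≤ n) (hσ : σ * (B' \ B).card = rk h B' - rk h B)
    (hmin : ∀ A, B ⊆ A → rk h A ≤ n → σ * (A \ B).card ≤ rk h A - rk h B)
    (hσθ : σ < theta N h B) :
    IsPartialWeight N h (B.piecewise ω fun _ => σ) B' where
  rk_le := hB'
  closed := closed_of_minimal_slope hBB'.subset hB' (hB.slope_pos hBB' hσ) hσ hmin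
  sum_le S hS := by
    refine sum_piecewise_const_le_rk (hB.sum_le _ inter_subset_right) ?_
    simpa only [union_sdiff_left] using hmin (B ∪ S) subset_union_left
      ((rk_mono h (union_subset hBB'.subset hS)).trans hB')
  sum_eq := by
    rw [sum_piecewise, inter_eq_right.2 hBB'.subset, hB.sum_eq, sum_const, nsmul_eq_mul,
      mul_comm, hσ]
    ring
  pos j _ := by
    by_cases hj : j ∈ B
    · simpa [hj] using hB.pos j hj
    · simpa [hj] using hB.slope_pos hBB' hσ
  lt_theta j _ := by
    have hθ := theta_lt_theta hnN hH hBB' hB' hσ hσθ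
    by_cases hj : j ∈ B
    · simpa [hj] using (hB.lt_theta j hj).trans hθ
    · simpa [hj] using hσθ.trans hθ
  theta_empty_le := hB.theta_empty_le.trans (theta_lt_theta hnN hH hBB' hB' hσ hσθ).le

lemma sum_piecewise_theta (hnN : n ≤ N) (hH : SubgeneralPos N h)
    (hB : IsPartialWeight N h ω B) :
    ∑ j, B.piecewise ω (fun _ => theta N h B) j = theta N h B * (q - 2 * N + n - 1) + n + 1 := by
  have hcard : ((univ \ B).card : ℚ) + B.card = q := by
    exact_mod_cast (card_sdiff_add_card_eq_card (subset_univ B)).trans (card_fin q)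
  rw [sum_piecewise, univ_inter, hB.sum_eq, sum_const, nsmul_eq_mul]
  linear_combination theta_mul_denom hnN hH hB.rk_le + theta N h B * hcard

lemma sum_piecewise_theta_le_rk (hnN : n ≤ N) (hH : SubgeneralPos N h) (hq : N + 1 ≤ q)
    (hB : IsPartialWeight N h ω B) (hstable : IsStable N h B) (hθ : theta N h B ≤ 1)
    {R : Finset (Fin q)} (hR : R.card ≤ N + 1) :
    ∑ j ∈ R, B.piecewise ω (fun _ => theta N h B) j ≤ rk h R := by
  set θ := theta N h B
  have hθD := theta_mul_denom hnN hH hB.rk_le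
  by_cases hsmall : θ * (R \ B).card ≤ n + 1 - rk h B
  · refine sum_piecewise_const_le_rk (hB.sum_le _ inter_subset_right) ?_
    rcases le_or_gt (rk h (B ∪ R)) n with hBR | hBR
    · simpa only [union_sdiff_left] using hstable (B ∪ R) subset_union_left hBR
    · rw [le_antisymm (_root_.rk_le h _) hBR]
      push_cast
      linarith
  -- `R \ B` is then so large that subgeneral position alone bounds `rk R` from below
  rw [not_le] at hsmall
  have hlarge : (2 * N - n + 1 - B.card : ℚ) < (R \ B).card := by
    by_contra! hle
    nlinarith [mul_le_mul_of_nonneg_left hle (theta_pos hnN hH hB.rk_le).le]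
  have hBcard : (B.card : ℚ) + n ≤ rk h B + N := by
    exact_mod_cast hH.card_add_le hq (by have := hH.card_le_of_rk_le hB.rk_le; omega)
  have hRcard : (R.card : ℚ) + n ≤ rk h R + N := by exact_mod_cast hH.card_add_le hq hR
  have hsplit : ((R ∩ B).card : ℚ) + (R \ B).card = R.card := by
    exact_mod_cast card_inter_add_card_sdiff R B
  have hinter : ∑ j ∈ R ∩ B, ω j ≤ (R ∩ B).card :=
    (hB.sum_le _ inter_subset_right).trans (by exact_mod_cast rk_le_card h _)
  rw [sum_piecewise, sum_const, nsmul_eq_mul]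
  nlinarith [mul_le_mul_of_nonneg_left hlarge.le (sub_nonneg.2 hθ)]

end IsPartialWeight

lemma exists_isStable (hnN : n ≤ N) (hH : SubgeneralPos N h) :
    ∃ ω B, IsPartialWeight N h ω B ∧ IsStable N h B := by
  classical
  obtain ⟨B, hB, hmax⟩ := exists_max_image {B | ∃ ω, IsPartialWeight N h ω B} card
    ⟨∅, by simpa using ⟨0, IsPartialWeight.empty hH.1⟩⟩
  simp only [mem_filter, mem_univ, true_and, forall_exists_index] at hB hmax
  obtain ⟨ω, hω⟩ := hB
  refine ⟨ω, B, hω, fun A₀ hBA₀ hA₀ => ?_⟩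
  by_contra! hlt
  have hBA₀ : B ⊂ A₀ := hBA₀.ssubset_of_ne (by rintro rfl; simp at hlt)
  obtain ⟨B', σ, hBB', hB', hσ, hmin⟩ := exists_minimal_slope hBA₀ hA₀
  have hσθ : σ < theta N h B := lt_of_mul_lt_mul_right
    ((hmin A₀ hBA₀.subset hA₀).trans_lt hlt) (card_sdiff_pos_of_ssubset hBA₀).le
  exact (card_lt_card hBB').not_ge (hmax B' _ (hω.extend hnN hH hBB' hB' hσ hmin hσθ))

end Nochka

open Nochka

/-- Nochka's theorem, existence of Nochka weights. -/
theorem nochka_weights_exist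
    (n N q : ℕ) (hn : 1 ≤ n) (hnN : n ≤ N) (hq : 2 * N - n + 1 < q)
    (h : Fin q → Fin (n + 1) → ℂ) (hH : SubgeneralPos N h) :
    ∃ ω : Fin q → ℚ, ∃ ωmax : ℚ,
      IsGreatest (Set.range ω) ωmax ∧
      (∀ j, 0 < ω j ∧ ω j ≤ (q : ℚ)) ∧
      (∑ j, ω j = ωmax * ((q : ℚ) - 2 * N + n - 1) + n + 1) ∧
      (((n : ℚ) + 1) / (2 * N - n + 1) ≤ ωmax ∧ ωmax ≤ (n : ℚ) / N) ∧
      (∀ R : Finset (Fin q), R.Nonempty → R.card ≤ N + 1 →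
        ∑ j ∈ R, ω j ≤ (rk h R : ℚ)) := by
  have hqN : N + 1 ≤ q := by omega
  obtain ⟨ω, B, hB, hstable⟩ := exists_isStable hnN hH
  have hθpos := theta_pos hnN hH hB.rk_le
  have hθ := theta_le_div hn hnN hH hqN hB.rk_le
  have hθ1 : theta N h B ≤ 1 := hθ.trans (div_le_one_of_le₀ (by exact_mod_cast hnN) (by simp))
  have hBq : ∃ j, j ∉ B := by
    by_contra! hall
    have := hH.card_le_of_rk_le hB.rk_le
    rw [eq_univ_of_forall hall, card_univ, Fintype.card_fin] at this
    omega
  refine ⟨B.piecewise ω fun _ => theta N h B, theta N h B,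
    isGreatest_range_piecewise_const hBq fun j hj => (hB.lt_theta j hj).le, fun j => ?_,
    hB.sum_piecewise_theta hnN hH, ⟨by simpa [theta] using hB.theta_empty_le, hθ⟩,
    fun R _ hR => hB.sum_piecewise_theta_le_rk hnN hH hqN hstable hθ1 hR⟩
  have hq1 : (1 : ℚ) ≤ q := by exact_mod_cast hqN.trans' (Nat.le_add_left 1 N)
  by_cases hj : j ∈ B
  · simpa [hj] using ⟨hB.pos j hj, by linarith [hB.lt_theta j hj]⟩
  · simpa [hj] using ⟨hθpos, by linarith⟩
end
end

section
/- Let n, N, q be integers with 1 ≤ n ≤ N and q > 2N − n + 1, and let H_1, …, H_q be hyperplanes of ℙ^n(ℂ) with coefficient vectors h_1, …, h_q ∈ ℂ^{n+1} in N-subgeneral position. Let ω : {1,…,q} → (0,∞) satisfy ∑_{j∈R'} ω(j) ≤ rk(R') for every nonempty subset R' ⊆ {1,…,q} with |R'| ≤ N + 1 (as Nochka weights do). Then for arbitrary real numbers E_1, …, E_q with E_j ≥ 1 for all j, and for every subset R ⊆ {1,…,q} with 0 < |R| ≤ N + 1, there exist distinct indices j_1, …, j_{rk(R)} ∈ R such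 that dim_ℂ span{h_{j_1}, …, h_{j_{rk(R)}}} = rk(R) and ∏_{j∈R} E_j^{ω(j)} ≤ ∏_{l=1}^{rk(R)} E_{j_l}. -/
open Finset

noncomputable section

/-!
The indices of `R` are added one at a time in order of decreasing `E_j`, keeping a spanning
subfamily `J` of the indices added so far; `J` grows exactly when the rank does. To make this
induction go through, the weighted product is multiplied by `m ^ (rk R - ∑_{j ∈ R} ω j)` for a
lower bound `m` of the `E_j`: the exponent is nonnegative by the Nochka inequality, and when a
new index `a` with the smallest `E_a` is added, the factor with `m = E_a` absorbs both `E_a ^ ω a`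
and, if the rank goes up, the new factor `E_a` of `∏_{j ∈ J} E_j`.
-/

theorem prod_insert_rpow_mul_rpow_le {ι : Type*} [DecidableEq ι] {a : ι} {s : Finset ι}
    (ha : a ∉ s) (ω E : ι → ℝ) {r r' : ℝ} (hr' : ∑ j ∈ insert a s, ω j ≤ r') {m : ℝ} (hm : 0 < m)
    (hmE : ∀ j ∈ insert a s, m ≤ E j) :
    (∏ j ∈ insert a s, E j ^ ω j) * m ^ (r' - ∑ j ∈ insert a s, ω j)
      ≤ (∏ j ∈ s, E j ^ ω j) * E a ^ (r - ∑ j ∈ s, ω j) * E a ^ (r' - r) := by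
  have hmEa : m ≤ E a := hmE a (mem_insert_self a s)
  have hEa : 0 < E a := hm.trans_le hmEa
  have hprod : 0 ≤ ∏ j ∈ insert a s, E j ^ ω j :=
    prod_nonneg fun j hj ↦ Real.rpow_nonneg (hm.le.trans (hmE j hj)) _
  calc (∏ j ∈ insert a s, E j ^ ω j) * m ^ (r' - ∑ j ∈ insert a s, ω j)
      ≤ (∏ j ∈ insert a s, E j ^ ω j) * E a ^ (r' - ∑ j ∈ insert a s, ω j) :=
        mul_le_mul_of_nonneg_left (Real.rpow_le_rpow hm.le hmEa (sub_nonneg.2 hr')) hprod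
    _ = (∏ j ∈ s, E j ^ ω j) * E a ^ (r - ∑ j ∈ s, ω j) * E a ^ (r' - r) := by
        rw [prod_insert ha, sum_insert ha, mul_comm (E a ^ ω a), mul_assoc, mul_assoc,
          ← Real.rpow_add hEa, ← Real.rpow_add hEa]
        congr 2
        ring

open Submodule Module

section
variable {K V : Type*} [Field K] [AddCommGroup V] [Module K V] [FiniteDimensional K V]

theorem finrank_span_insert_le (x : V) (S : Set V) :
    finrank K (span K (insert x S)) ≤ finrank K (span K S) + 1 := by
  rw [span_insert, add_comm]
  refine (finrank_add_le_finrank_add_finrank _ _).trans (Nat.add_le_add_right ?_ _)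
  simpa using finrank_span_le_card (R := K) ({x} : Set V)

theorem span_insert_eq_or_finrank_span_insert_eq_succ (x : V) (S : Set V) :
    span K (insert x S) = span K S ∨
      finrank K (span K (insert x S)) = finrank K (span K S) + 1 := by
  by_cases hx : x ∈ span K S
  · exact Or.inl (span_insert_eq_span hx)
  · refine Or.inr (le_antisymm (finrank_span_insert_le x S) (finrank_lt_finrank_of_lt ?_))
    exact (span_mono (Set.subset_insert x S)).lt_of_ne fun h ↦
      hx (h ▸ subset_span (Set.mem_insert x S))

theorem exists_spanning_subset_prod_rpow_mul_rpow_le {ι : Type*} [DecidableEq ι]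
    (v : ι → V) (ω E : ι → ℝ) (s : Finset ι)
    (hω : ∀ t ⊆ s, t.Nonempty → ∑ j ∈ t, ω j ≤ finrank K (span K (v '' t))) :
    ∃ J ⊆ s, J.card = finrank K (span K (v '' s)) ∧ span K (v '' J) = span K (v '' s) ∧
      ∀ m : ℝ, 0 < m → (∀ j ∈ s, m ≤ E j) →
        (∏ j ∈ s, E j ^ ω j) * m ^ ((finrank K (span K (v '' s)) : ℝ) - ∑ j ∈ s, ω j)
          ≤ ∏ j ∈ J, E j := by
  induction s using Finset.induction_on_min_value (f := E) with
  | empty =>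
    have hr : finrank K (span K (v '' ↑(∅ : Finset ι))) = 0 := by
      rw [coe_empty, Set.image_empty, span_empty, finrank_bot]
    exact ⟨∅, subset_refl _, by rw [hr, card_empty], rfl, fun m _ _ ↦ by simp [hr]⟩
  | insert a s ha hmin ih =>
    obtain ⟨J, hJs, hJcard, hJspan, hJprod⟩ :=
      ih fun t ht ↦ hω t (ht.trans (subset_insert a s))
    have hdefect : ∑ j ∈ insert a s, ω j ≤ finrank K (span K (v '' ↑(insert a s))) :=
      hω _ subset_rfl (insert_nonempty a s)
    have key : ∀ m : ℝ, 0 < m → (∀ j ∈ insert a s, m ≤ E j) →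
        (∏ j ∈ insert a s, E j ^ ω j) *
            m ^ ((finrank K (span K (v '' ↑(insert a s))) : ℝ) - ∑ j ∈ insert a s, ω j)
          ≤ (∏ j ∈ J, E j) * E a ^ ((finrank K (span K (v '' ↑(insert a s))) : ℝ) -
            finrank K (span K (v '' s))) := fun m hm hmE ↦
      have hEa : 0 < E a := hm.trans_le (hmE a (mem_insert_self a s))
      (prod_insert_rpow_mul_rpow_le ha ω E hdefect hm hmE).trans
        (mul_le_mul_of_nonneg_right (hJprod _ hEa hmin) (Real.rpow_nonneg hEa.le _))
    have hspan_insert : span K (v '' ↑(insert a s)) = span K (insert (v a) (v '' s)) := by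
      rw [coe_insert, Set.image_insert_eq]
    rcases span_insert_eq_or_finrank_span_insert_eq_succ (K := K) (v a) (v '' s) with
      hspan | hrank
    · rw [← hspan_insert] at hspan
      refine ⟨J, hJs.trans (subset_insert a s), by rw [hJcard, hspan], by rw [hJspan, hspan],
        fun m hm hmE ↦ ?_⟩
      exact (key m hm hmE).trans_eq (by rw [hspan, sub_self, Real.rpow_zero, mul_one])
    · rw [← hspan_insert] at hrank
      have haJ : a ∉ J := fun h ↦ ha (hJs h)
      refine ⟨insert a J, insert_subset_insert a hJs, by rw [card_insert_of_notMem haJ, hJcard,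
        hrank], by simp only [coe_insert, Set.image_insert_eq, span_insert, hJspan],
        fun m hm hmE ↦ ?_⟩
      simpa [hrank, prod_insert haJ, mul_comm (E a)] using key m hm hmE

end

theorem nochka_product_lemma_general
    (n N q : ℕ)
    (h : Fin q → Fin (n + 1) → ℂ)
    (ω : Fin q → ℝ)
    (hrk : ∀ R' : Finset (Fin q), R'.Nonempty → R'.card ≤ N + 1 →
      ∑ j ∈ R', ω j ≤ (rk h R' : ℝ))
    (E : Fin q → ℝ) (hE : ∀ j, 1 ≤ E j)
    (R : Finset (Fin q)) (hRcard : R.card ≤ N + 1) :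
    ∃ J : Finset (Fin q), J ⊆ R ∧ J.card = rk h R ∧
      Module.finrank ℂ (Submodule.span ℂ (h '' ↑J)) = rk h R ∧
      ∏ j ∈ R, E j ^ ω j ≤ ∏ j ∈ J, E j := by
  obtain ⟨J, hJR, hJcard, hJspan, hJprod⟩ := exists_spanning_subset_prod_rpow_mul_rpow_le h ω E R
    fun t ht ht0 ↦ hrk t ht0 ((card_le_card ht).trans hRcard)
  refine ⟨J, hJR, hJcard, by rw [hJspan]; rfl, ?_⟩
  simpa using hJprod 1 one_pos fun j _ ↦ hE j

/-- Nochka's product lemma: for weights `ω` satisfying the Nochka weight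
inequality and any numbers `E_j ≥ 1`, and any `R` with `0 < |R| ≤ N + 1`, one can select
`rk(R)` indices in `R` spanning a space of dimension `rk(R)` and dominating the weighted
product. -/
theorem nochka_product_lemma
    (n N q : ℕ) (hn : 1 ≤ n) (hnN : n ≤ N) (hq : 2 * N - n + 1 < q)
    (h : Fin q → Fin (n + 1) → ℂ) (hH : SubgeneralPos N h)
    (ω : Fin q → ℝ) (hωpos : ∀ j, 0 < ω j)
    (hrk : ∀ R' : Finset (Fin q), R'.Nonempty → R'.card ≤ N + 1 →
      ∑ j ∈ R', ω j ≤ (rk h R' : ℝ))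
    (E : Fin q → ℝ) (hE : ∀ j, 1 ≤ E j)
    (R : Finset (Fin q)) (hR0 : R.Nonempty) (hRcard : R.card ≤ N + 1) :
    ∃ J : Finset (Fin q), J ⊆ R ∧ J.card = rk h R ∧
      Module.finrank ℂ (Submodule.span ℂ (h '' ↑J)) = rk h R ∧
      ∏ j ∈ R, E j ^ ω j ≤ ∏ j ∈ J, E j :=
  nochka_product_lemma_general n N q h ω hrk E hE R hRcard
end
end

section
/- Let m ≥ 1, c ∈ ℂ^m, and let f_0, …, f_n be entire functions on ℂ^m with no common zeros (a reduced representation of a meromorphic mapping f : ℂ^m → ℙ^n(ℂ)). Then the Casorati determinant C(f_0, …, f_n) vanishes identically on ℂ^m if and only if f_0, …, f_n are linearly dependent over the field 𝒫_c of c-periodic meromorphic functions; equivalently, C(f_0, …, f_n) ≢ 0 if and only if f is linearly nondegenerate over 𝒫_c. -/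
open MeasureTheory Filter Finset Metric

noncomputable section

/-- `ℂ^m` with the Euclidean norm. -/
abbrev Cm (m : ℕ) := EuclideanSpace ℂ (Fin m)

instance (m : ℕ) : MeasurableSpace (Cm m) := MeasurableSpace.comap WithLp.ofLp MeasurableSpace.pi
instance (m : ℕ) : BorelSpace (Cm m) := PiLp.borelSpace 2
instance (m : ℕ) : MeasureSpace (Cm m) := ⟨Measure.map (WithLp.toLp 2) (Measure.pi fun _ => volume)⟩

/-- The mean of `φ` over the sphere `‖z‖ = r`, with respect to the normalized surface
measure. -/
def sphereMean (m : ℕ) (φ : Cm m → ℝ) (r : ℝ) : ℝ :=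
  ⨍ ξ : sphere (0 : Cm m) 1, φ (r • (ξ : Cm m)) ∂((volume : Measure (Cm m)).toSphere)

def logPlus (x : ℝ) : ℝ := max (Real.log x) 0

/-- The Nevanlinna characteristic function of a tuple of entire functions. -/
def charT {m : ℕ} {ι : Type*} [Fintype ι] [Nonempty ι] (g : ι → Cm m → ℂ) (r : ℝ) : ℝ :=
  sphereMean m (fun z => Real.log (⨆ j, ‖g j z‖)) r -
    sphereMean m (fun z => Real.log (⨆ j, ‖g j z‖)) 1

/-- The hyperorder `ζ₂` of a tuple of entire functions. -/
def hyperOrder {m : ℕ} {ι : Type*} [Fintype ι] [Nonempty ι] (g : ι → Cm m → ℂ) : ℝ :=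
  limsup (fun r : ℝ => logPlus (logPlus (charT g r)) / Real.log r) atTop

/-- The Casorati determinant `C(g₀, …, g_n)(z) = det (g_j (z + k • c))`. -/
def casorati {m n : ℕ} (c : Cm m) (g : Fin (n + 1) → Cm m → ℂ) (z : Cm m) : ℂ :=
  Matrix.det (Matrix.of fun k j : Fin (n + 1) => g j (z + (k : ℕ) • c))

/-- The order of vanishing of `g` at `a` (`⊤` if all Taylor coefficients vanish). -/
def ordAt {m : ℕ} (g : Cm m → ℂ) (a : Cm m) : ℕ∞ :=
  sInf ((fun k : ℕ => (k : ℕ∞)) '' {k : ℕ | iteratedFDeriv ℂ k g a ≠ 0})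

def FiniteLogMeasure (E : Set ℝ) : Prop :=
  E ⊆ Set.Ici 1 ∧ (∫⁻ t in E, ENNReal.ofReal t⁻¹) < ⊤

/-- `f₀, …, f_n` are linearly dependent over the field `𝒫_c` of `c`-periodic meromorphic
functions on `ℂ^m`. -/
def LinDepPc {m n : ℕ} (c : Cm m) (f : Fin (n + 1) → Cm m → ℂ) : Prop :=
  ∃ p q : Fin (n + 1) → Cm m → ℂ,
    (∀ j, Differentiable ℂ (p j)) ∧ (∀ j, Differentiable ℂ (q j)) ∧
    (∀ j, q j ≠ 0) ∧
    (∀ j, ∀ z, p j (z + c) * q j z = p j z * q j (z + c)) ∧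
    (∃ j, p j ≠ 0) ∧
    (∀ z, ∑ j, p j z * (∏ k ∈ univ.erase j, q k z) * f j z = 0)

/-- `f₀, …, f_n` are linearly dependent over the class `𝒫_c^λ` of `c`-periodic meromorphic
functions of hyperorder `< λ` on `ℂ^m`. -/
def LinDepPcL {m n : ℕ} (c : Cm m) (lam : ℝ) (f : Fin (n + 1) → Cm m → ℂ) : Prop :=
  ∃ p q : Fin (n + 1) → Cm m → ℂ,
    (∀ j, Differentiable ℂ (p j)) ∧ (∀ j, Differentiable ℂ (q j)) ∧
    (∀ j, q j ≠ 0) ∧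
    (∀ j, ∀ z, p j (z + c) * q j z = p j z * q j (z + c)) ∧
    (∀ j, hyperOrder ![p j, q j] < lam) ∧
    (∃ j, p j ≠ 0) ∧
    (∀ z, ∑ j, p j z * (∏ k ∈ univ.erase j, q k z) * f j z = 0)

/-! If `∑ⱼ pⱼ fⱼ = 0` with `c`-periodic ratios `pⱼ / qⱼ`, then at every point `z` where no
`qₖ (z + i • c)` vanishes, periodicity makes `(pⱼ z / qⱼ z)ⱼ` a nonzero kernel vector of the
Casorati matrix at `z`; these points are dense, so the Casoratian vanishes identically.

Conversely, if the Casoratian vanishes, drop the last member of the family as long as the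
Casoratian of what remains still vanishes (a single function with vanishing Casoratian is `0`).
This ends with `F₀, …, F_{r+1}` whose Casoratian vanishes while that of `F₀, …, F_r` does not. The
first-row cofactors `aᵢ` of its Casorati matrix satisfy `∑ aᵢ Fᵢ = 0`, `a_{r+1}` is a shift of the
Casoratian of `F₀, …, F_r`, and `aᵢ / a_{r+1}` is `c`-periodic: up to a common sign, the first-row
cofactors at `z` are the last-row cofactors at `z + c`, and any two columns of the adjugate of a
singular matrix are proportional. -/

open Function Matrix Set Topology

theorem Differentiable.dense_setOf_ne_zero {E : Type*} [NormedAddCommGroup E] [NormedSpace ℂ E]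
    {h : E → ℂ} (hd : Differentiable ℂ h) (h0 : h ≠ 0) : Dense {z | h z ≠ 0} := by
  obtain ⟨z₀, hz₀⟩ := Function.ne_iff.mp h0
  rw [dense_iff_inter_open]
  rintro U hU ⟨w, hw⟩
  by_contra hempty
  have hU0 : ∀ u ∈ U, h u = 0 := fun u hu => by_contra fun hu0 => hempty ⟨u, hu, hu0⟩
  -- the identity theorem is applied on the complex line through `w` and `z₀`
  let φ : ℂ → E := fun t => w + t • (z₀ - w)
  have hana : AnalyticOnNhd ℂ (h ∘ φ) univ :=
    Complex.analyticOnNhd_univ_iff_differentiable.mpr (hd.comp (by fun_prop))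
  have hev : h ∘ φ =ᶠ[𝓝 0] 0 := by
    have hφ : φ ⁻¹' U ∈ 𝓝 (0 : ℂ) :=
      (show Continuous φ by fun_prop).continuousAt.preimage_mem_nhds
        (by simpa [φ] using hU.mem_nhds hw)
    filter_upwards [hφ] with t ht using hU0 _ ht
  have h1 := hana.eqOn_zero_of_preconnected_of_eventuallyEq_zero isPreconnected_univ
    (mem_univ 0) hev (mem_univ 1)
  exact hz₀ (by simpa [φ] using h1)

theorem comp_add_right_ne_zero {E K : Type*} [AddGroup E] [Zero K] {g : E → K} (hg : g ≠ 0)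
    (w : E) : (fun z => g (z + w)) ≠ 0 :=
  fun h => hg (funext fun z => by simpa using congrFun h (z - w))

theorem div_add_nsmul_eq_div {E K : Type*} [AddMonoid E] [Field K] {g h : E → K} {c : E}
    (hper : ∀ w, g (w + c) * h w = g w * h (w + c)) {z : E} {N : ℕ}
    (hh : ∀ i ≤ N, h (z + i • c) ≠ 0) : g (z + N • c) / h (z + N • c) = g z / h z := by
  induction N with
  | zero => simp
  | succ N ih =>
    rw [← ih fun i hi => hh i (by omega), div_eq_div_iff (hh _ le_rfl) (hh N (by omega)),
      succ_nsmul, ← add_assoc]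
    exact hper _

theorem sum_mul_div_eq_zero {ι K : Type*} [Fintype ι] [DecidableEq ι] [Field K] {p q x : ι → K}
    (hq : ∀ j, q j ≠ 0) (h : ∑ j, p j * (∏ k ∈ univ.erase j, q k) * x j = 0) :
    ∑ j, x j * (p j / q j) = 0 := by
  have hQ : ∏ k, q k ≠ 0 := prod_ne_zero_iff.mpr fun k _ => hq k
  refine (mul_eq_zero.mp ?_).resolve_left hQ
  rw [mul_sum, ← h]
  refine sum_congr rfl fun j _ => ?_
  rw [← mul_prod_erase univ q (mem_univ j)]
  field_simp [hq j]

namespace Matrix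

variable {K : Type*} [Field K] {N : ℕ}

theorem eq_zero_of_mulVec_eq_zero_of_det_submatrix_ne_zero
    {A : Matrix (Fin (N + 1)) (Fin (N + 1)) K} {s i₀ : Fin (N + 1)}
    (h : (A.submatrix s.succAbove i₀.succAbove).det ≠ 0) {w : Fin (N + 1) → K}
    (hw : A *ᵥ w = 0) (hw₀ : w i₀ = 0) : w = 0 := by
  have hsub : A.submatrix s.succAbove i₀.succAbove *ᵥ (w ∘ i₀.succAbove) = 0 := by
    funext k
    have hk := congrFun hw (s.succAbove k)
    simp only [mulVec, dotProduct, Fin.sum_univ_succAbove _ i₀, hw₀, mul_zero, zero_add]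
      at hk ⊢
    exact hk
  have hw' := eq_zero_of_mulVec_eq_zero h hsub
  funext j
  rcases eq_or_ne j i₀ with rfl | hj
  · exact hw₀
  · obtain ⟨x, rfl⟩ := Fin.exists_succAbove_eq hj
    exact congrFun hw' x

theorem adjugate_mul_adjugate_eq_of_det_eq_zero {A : Matrix (Fin (N + 1)) (Fin (N + 1)) K}
    (hA : A.det = 0) (i l s t : Fin (N + 1)) :
    adjugate A i s * adjugate A l t = adjugate A l s * adjugate A i t := by
  have hker : ∀ s', A *ᵥ (fun j => adjugate A j s') = 0 := fun s' => funext fun k => by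
    simpa [mul_apply, mulVec, dotProduct, hA] using congrFun (congrFun (mul_adjugate A) k) s'
  set u : Fin (N + 1) → K := fun j => adjugate A j s
  set v : Fin (N + 1) → K := fun j => adjugate A j t
  by_cases hu : u = 0
  · simp [show adjugate A i s = 0 from congrFun hu i, show adjugate A l s = 0 from congrFun hu l]
  obtain ⟨i₀, hi₀⟩ := Function.ne_iff.mp hu
  have hminor : (A.submatrix s.succAbove i₀.succAbove).det ≠ 0 := fun h => hi₀ <| by
    simp [u, adjugate_fin_succ_eq_det_submatrix, h]
  have hprop : v i₀ • u - u i₀ • v = 0 :=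
    eq_zero_of_mulVec_eq_zero_of_det_submatrix_ne_zero hminor
      (by simp only [mulVec_sub, mulVec_smul, u, v, hker, smul_zero, sub_zero])
      (by simp only [Pi.sub_apply, Pi.smul_apply, smul_eq_mul]; ring)
  have hj : ∀ j, v i₀ * u j = u i₀ * v j := fun j => by
    simpa [sub_eq_zero] using congrFun hprop j
  apply mul_left_cancel₀ hi₀
  linear_combination u l * hj i - u i * hj l

end Matrix

section Casorati

variable {m : ℕ} {c : Cm m}

def casoratiMatrix {n : ℕ} (c : Cm m) (F : Fin (n + 1) → Cm m → ℂ) (z : Cm m) :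
    Matrix (Fin (n + 1)) (Fin (n + 1)) ℂ :=
  of fun k j => F j (z + (k : ℕ) • c)

theorem casorati_apply {n : ℕ} (F : Fin (n + 1) → Cm m → ℂ) (z : Cm m) :
    casorati c F z = (casoratiMatrix c F z).det :=
  rfl

theorem differentiable_casorati {n : ℕ} {F : Fin (n + 1) → Cm m → ℂ}
    (hF : ∀ j, Differentiable ℂ (F j)) : Differentiable ℂ (casorati c F) := by
  unfold casorati
  simp only [det_apply, of_apply]
  fun_prop

theorem casorati_fin_one (F : Fin 1 → Cm m → ℂ) : casorati c F = F 0 := by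
  funext z
  rw [casorati, det_fin_one]
  simp

theorem casoratiMatrix_submatrix_succ {n : ℕ} (F : Fin (n + 2) → Cm m → ℂ)
    (σ : Fin (n + 1) → Fin (n + 2)) (z : Cm m) :
    (casoratiMatrix c F z).submatrix Fin.succ σ = casoratiMatrix c (fun x => F (σ x)) (z + c) := by
  ext k x
  simp [casoratiMatrix, succ_nsmul', add_assoc]

theorem casoratiMatrix_submatrix_castSucc {n : ℕ} (F : Fin (n + 2) → Cm m → ℂ)
    (σ : Fin (n + 1) → Fin (n + 2)) (z : Cm m) :
    (casoratiMatrix c F z).submatrix Fin.castSucc σ = casoratiMatrix c (fun x => F (σ x)) z := by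
  ext k x
  simp [casoratiMatrix]

variable {r : ℕ} (F : Fin (r + 2) → Cm m → ℂ) (z : Cm m) (i : Fin (r + 2))

theorem adjugate_casoratiMatrix_apply_zero :
    adjugate (casoratiMatrix c F z) i 0 =
      (-1) ^ (i : ℕ) * casorati c (fun x => F (i.succAbove x)) (z + c) := by
  rw [adjugate_fin_succ_eq_det_submatrix, Fin.succAbove_zero, casoratiMatrix_submatrix_succ]
  simp [casorati_apply]

theorem adjugate_casoratiMatrix_apply_zero_eq_apply_last :
    adjugate (casoratiMatrix c F z) i 0 =
      (-1) ^ (r + 1) * adjugate (casoratiMatrix c F (z + c)) i (Fin.last (r + 1)) := by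
  rw [adjugate_casoratiMatrix_apply_zero, adjugate_fin_succ_eq_det_submatrix, Fin.succAbove_last,
    casoratiMatrix_submatrix_castSucc, ← casorati_apply, Fin.val_last, ← mul_assoc, ← pow_add,
    show r + 1 + (r + 1 + (i : ℕ)) = 2 * (r + 1) + i by ring, pow_add, pow_mul]
  simp

end Casorati

section Dependence

variable {m n : ℕ} {c : Cm m}

theorem exists_periodic_relation_of_casorati_eq_zero {r : ℕ} {F : Fin (r + 2) → Cm m → ℂ}
    (hF : ∀ i, Differentiable ℂ (F i)) (hc : casorati c F = 0)
    (hc' : casorati c (fun i => F i.castSucc) ≠ 0) :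
    ∃ a : Fin (r + 2) → Cm m → ℂ, (∀ i, Differentiable ℂ (a i)) ∧ a (Fin.last _) ≠ 0 ∧
      (∀ i z, a i (z + c) * a (Fin.last _) z = a i z * a (Fin.last _) (z + c)) ∧
      ∀ z, ∑ i, F i z * a i z = 0 := by
  refine ⟨fun i z => adjugate (casoratiMatrix c F z) i 0, fun i => ?_, ?_, fun i z => ?_,
    fun z => ?_⟩
  · simp only [adjugate_casoratiMatrix_apply_zero]
    exact ((differentiable_casorati fun x => hF _).comp (differentiable_id.add_const c)).const_mul _
  · intro h
    refine comp_add_right_ne_zero hc' c (funext fun z => ?_)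
    simpa [adjugate_casoratiMatrix_apply_zero] using congrFun h z
  · have h := adjugate_mul_adjugate_eq_of_det_eq_zero (A := casoratiMatrix c F (z + c))
      (congrFun hc (z + c)) i (Fin.last _) 0 (Fin.last _)
    simp only [adjugate_casoratiMatrix_apply_zero_eq_apply_last F z]
    linear_combination (-1 : ℂ) ^ (r + 1) * h
  · have h := congrFun (congrFun (mul_adjugate (casoratiMatrix c F z)) 0) 0
    rw [← casorati_apply, hc] at h
    simpa [mul_apply, casoratiMatrix] using h

theorem linDepPc_of_relation {f : Fin (n + 1) → Cm m → ℂ} {ι : Type*} [Fintype ι]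
    {e : ι → Fin (n + 1)} (he : Injective e) {a : ι → Cm m → ℂ} {i₀ : ι}
    (ha : ∀ i, Differentiable ℂ (a i)) (ha₀ : a i₀ ≠ 0)
    (hper : ∀ i z, a i (z + c) * a i₀ z = a i z * a i₀ (z + c))
    (hrel : ∀ z, ∑ i, f (e i) z * a i z = 0) : LinDepPc c f := by
  have hext : ∀ j, (∃ i, e i = j ∧ extend e a 0 j = a i) ∨
      extend e a (0 : Fin (n + 1) → Cm m → ℂ) j = 0 := fun j => by
    by_cases hj : ∃ i, e i = j
    · obtain ⟨i, rfl⟩ := hj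
      exact .inl ⟨i, rfl, he.extend_apply a _ i⟩
    · exact .inr (extend_apply' a _ j hj)
  refine ⟨extend e a 0, fun _ => a i₀, fun j => ?_, fun _ => ha i₀, fun _ => ha₀,
    fun j z => ?_, ⟨e i₀, by rwa [he.extend_apply]⟩, fun z => ?_⟩
  · rcases hext j with ⟨i, -, h⟩ | h <;> rw [h]
    exacts [ha i, differentiable_const (0 : ℂ)]
  · rcases hext j with ⟨i, -, h⟩ | h <;> rw [h]
    exacts [hper i z, by simp]
  · have hsum : ∑ j, extend e a 0 j z * f j z = ∑ i, f (e i) z * a i z :=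
      (Fintype.sum_of_injective e he _ _
        (fun j hj => by rw [extend_apply' a _ j hj, Pi.zero_apply, Pi.zero_apply, zero_mul])
        fun i => by rw [he.extend_apply, mul_comm]).symm
    simp only [prod_const, card_erase_of_mem (mem_univ _), card_univ, Fintype.card_fin,
      add_tsub_cancel_right]
    calc ∑ j, extend e a 0 j z * a i₀ z ^ n * f j z
        = a i₀ z ^ n * ∑ j, extend e a 0 j z * f j z := by
          rw [mul_sum]; exact sum_congr rfl fun j _ => by ring
      _ = 0 := by rw [hsum, hrel, mul_zero]

theorem linDepPc_of_casorati_comp_eq_zero {f : Fin (n + 1) → Cm m → ℂ}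
    (hf : ∀ j, Differentiable ℂ (f j)) :
    ∀ (s : ℕ) (e : Fin (s + 1) → Fin (n + 1)), Injective e →
      casorati c (fun i => f (e i)) = 0 → LinDepPc c f
  | 0, e, he, hc =>
    linDepPc_of_relation he (a := fun _ _ => 1) (i₀ := 0) (fun _ => differentiable_const 1)
      (fun h => one_ne_zero (α := ℂ) (congrFun h 0)) (fun _ _ => rfl)
      fun z => by simpa using congrFun ((casorati_fin_one _).symm.trans hc) z
  | s + 1, e, he, hc => by
    by_cases hc' : casorati c (fun i => f (e i.castSucc)) = 0
    · exact linDepPc_of_casorati_comp_eq_zero hf s _ (he.comp (Fin.castSucc_injective _)) hc'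
    · obtain ⟨a, ha, ha₀, hper, hrel⟩ :=
        exists_periodic_relation_of_casorati_eq_zero (fun i => hf (e i)) hc hc'
      exact linDepPc_of_relation he ha ha₀ hper hrel

theorem casorati_apply_eq_zero_of_relation {f p q : Fin (n + 1) → Cm m → ℂ}
    (hper : ∀ j z, p j (z + c) * q j z = p j z * q j (z + c))
    (hrel : ∀ z, ∑ j, p j z * (∏ k ∈ univ.erase j, q k z) * f j z = 0)
    {z : Cm m} {j₀ : Fin (n + 1)} (hp : p j₀ z ≠ 0)
    (hq : ∀ i k : Fin (n + 1), q k (z + (i : ℕ) • c) ≠ 0) :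
    casorati c f z = 0 := by
  have hq' : ∀ k (i : ℕ), i ≤ n → q k (z + i • c) ≠ 0 := fun k i hi =>
    hq ⟨i, Nat.lt_succ_of_le hi⟩ k
  refine exists_mulVec_eq_zero_iff.mp ⟨fun j => p j z / q j z, fun h => ?_, funext fun i => ?_⟩
  · exact div_ne_zero hp (by simpa using hq' j₀ 0 (Nat.zero_le n)) (congrFun h j₀)
  · have hratio : ∀ j, p j (z + (i : ℕ) • c) / q j (z + (i : ℕ) • c) = p j z / q j z :=
      fun j => div_add_nsmul_eq_div (hper j) fun l hl => hq' j l (by omega)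
    simp only [mulVec, dotProduct, of_apply, Pi.zero_apply, ← hratio]
    exact sum_mul_div_eq_zero (fun k => hq i k) (hrel _)

theorem casorati_eq_zero_of_linDepPc {f : Fin (n + 1) → Cm m → ℂ}
    (hf : ∀ j, Differentiable ℂ (f j)) (h : LinDepPc c f) : casorati c f = 0 := by
  obtain ⟨p, q, hp, hq, hq₀, hper, ⟨j₀, hpj₀⟩, hrel⟩ := h
  have hshift : ∀ ik : Fin (n + 1) × Fin (n + 1),
      Differentiable ℂ fun z => q ik.2 (z + (ik.1 : ℕ) • c) :=
    fun ik => (hq ik.2).comp (differentiable_id.add_const _)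
  have hdense : Dense ({z | p j₀ z ≠ 0} ∩
      ⋂ ik : Fin (n + 1) × Fin (n + 1), {z | q ik.2 (z + (ik.1 : ℕ) • c) ≠ 0}) :=
    ((hp j₀).dense_setOf_ne_zero hpj₀).inter_of_isOpen_left
      (dense_iInter_of_isOpen (fun ik => isOpen_ne_fun (hshift ik).continuous continuous_const)
        fun ik => (hshift ik).dense_setOf_ne_zero (comp_add_right_ne_zero (hq₀ ik.2) _))
      (isOpen_ne_fun (hp j₀).continuous continuous_const)
  exact (differentiable_casorati hf).continuous.ext_on hdense continuous_const fun z hz =>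
    casorati_apply_eq_zero_of_relation hper hrel hz.1 fun i k => mem_iInter.mp hz.2 (i, k)

end Dependence

theorem casorati_eq_zero_iff_linDepPc_general
    (m : ℕ) (c : Cm m) (n : ℕ)
    (f : Fin (n + 1) → Cm m → ℂ)
    (hf : ∀ j, Differentiable ℂ (f j)) :
    casorati c f = 0 ↔ LinDepPc c f :=
  ⟨linDepPc_of_casorati_comp_eq_zero hf n id injective_id, casorati_eq_zero_of_linDepPc hf⟩

/-- Lemma 3.4 (i): the Casorati determinant of a reduced representation
vanishes identically iff the coordinate functions are linearly dependent over 𝒫_c. -/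
theorem casorati_eq_zero_iff_linDepPc
    (m : ℕ) (hm : 1 ≤ m) (c : Cm m) (n : ℕ)
    (f : Fin (n + 1) → Cm m → ℂ)
    (hf : ∀ j, Differentiable ℂ (f j))
    (hred : ∀ z, ∃ j, f j z ≠ 0) :
    casorati c f = 0 ↔ LinDepPc c f :=
  casorati_eq_zero_iff_linDepPc_general m c n f hf
end
end
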